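/- arXiv:2503.08355 — 2 statements merged into one kernel-verified Lean document; each statement's English description precedes it below -/
import Mathlib

section
/- Let μ be an (a,b)-standard probability measure on ℝ^D, i.e., μ(B(x,R)) ≥ min(a R^b, 1) for all x ∈ supp(μ) and R > 0, with a > 0 and b > 0. Let X_1, …, X_N be i.i.d. from μ, x̃ ∈ supp(μ), and 1 ≤ r ≤ N. Then for all t ≥ 1, ℙ(‖X̃_r − x̃‖ ≥ t (r/(N a))^{1/b}) ≤ exp(2/3) exp(−t^b), where X̃_r denotes the r-th nearest neighbor of x̃ among X_1, …, X_N. -/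
/-!
On the event, fewer than `r` samples fall in the open ball `B(x̃, ρ)`, `ρ = t (r/(Na))^{1/b}`,
whose mass `p` is at least `min (t^b r / N) 1` by standardness, so the probability is at most
`F(p) = ℙ(Bin(N, p) < r) = N ∫_p^1 f` with `f = b_{N-1,r-1}` the Bernstein density.
Since `f` is log-concave, `F / f` is antitone; with `c = r/N ≤ q = t^b c` this gives
`F(q) ≤ F(c) f(q) / f(c) ≤ F(c) e^{1 - t^b}`, using `x ≤ e^{x-1}` for both factors of `f`.
Finally `F(c) ≤ 1/2`, i.e. the mean `r` of `Bin(N, r/N)` is a median: substituting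
`u = c e^{±w}` turns `∫_c^1 f ≤ ∫_{c²}^c f` into a pointwise inequality between the integrands
at `w` and `-w`, proved by differentiating its logarithm. It remains that `e/2 ≤ e^{2/3}`.
-/

open MeasureTheory ProbabilityTheory Metric Real

/-- The topological support of a measure: points all of whose neighborhoods have
positive mass. -/
def measSupport {E : Type*} [MeasurableSpace E] [PseudoMetricSpace E]
    (μ : Measure E) : Set E :=
  {x | ∀ r > (0 : ℝ), 0 < μ (Metric.ball x r)}

section

open Finset Polynomial

/-- `binomialLowerTail n r p` is `ℙ(Bin(n, p) < r)`. -/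
noncomputable def binomialLowerTail (n r : ℕ) (p : ℝ) : ℝ :=
  ∑ j ∈ range r, (bernsteinPolynomial ℝ n j).eval p

lemma bernsteinPolynomial_eval (n ν : ℕ) (u : ℝ) :
    (bernsteinPolynomial ℝ n ν).eval u = n.choose ν * u ^ ν * (1 - u) ^ (n - ν) := by
  simp [bernsteinPolynomial]

lemma bernsteinPolynomial_eval_nonneg (n ν : ℕ) {u : ℝ} (hu : u ∈ Set.Icc (0 : ℝ) 1) :
    0 ≤ (bernsteinPolynomial ℝ n ν).eval u := by
  rw [bernsteinPolynomial_eval]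
  have := sub_nonneg.2 hu.2
  have := hu.1
  positivity

lemma derivative_sum_bernsteinPolynomial {R : Type*} [CommRing R] (n k : ℕ) :
    derivative (∑ j ∈ range (k + 1), bernsteinPolynomial R n j) =
      -(n * bernsteinPolynomial R (n - 1) k) := by
  induction k with
  | zero => simp [bernsteinPolynomial.derivative_zero]
  | succ k ih =>
    rw [sum_range_succ, derivative_add, ih, bernsteinPolynomial.derivative_succ]
    ring

lemma hasDerivAt_binomialLowerTail (n k : ℕ) (p : ℝ) :
    HasDerivAt (binomialLowerTail (n + 1) (k + 1))
      (-((n + 1) * (bernsteinPolynomial ℝ n k).eval p)) p := by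
  have h := (∑ j ∈ range (k + 1), bernsteinPolynomial ℝ (n + 1) j).hasDerivAt p
  simp only [derivative_sum_bernsteinPolynomial, eval_finsetSum] at h
  unfold binomialLowerTail
  simpa using h

lemma binomialLowerTail_zero (n k : ℕ) : binomialLowerTail n (k + 1) 0 = 1 := by
  simp [binomialLowerTail, bernsteinPolynomial.eval_at_0]

lemma binomialLowerTail_one {n r : ℕ} (hr : r ≤ n) : binomialLowerTail n r 1 = 0 := by
  simp only [binomialLowerTail, bernsteinPolynomial.eval_at_1]
  exact sum_eq_zero fun j hj => if_neg (by simp at hj; omega)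

lemma binomialLowerTail_eq_integral {n k : ℕ} (hk : k ≤ n) (p : ℝ) :
    binomialLowerTail (n + 1) (k + 1) p =
      (n + 1) * ∫ u in p..1, (bernsteinPolynomial ℝ n k).eval u := by
  have hcont : Continuous fun u => (bernsteinPolynomial ℝ n k).eval u :=
    (bernsteinPolynomial ℝ n k).continuous
  rw [← intervalIntegral.integral_const_mul, ← neg_neg (∫ _ in p..1, _),
    ← intervalIntegral.integral_neg,
    intervalIntegral.integral_eq_sub_of_hasDerivAt
      (fun u _ => hasDerivAt_binomialLowerTail n k u)
      ((hcont.const_mul _).neg.intervalIntegrable _ _), binomialLowerTail_one (by omega)]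
  ring

lemma binomialLowerTail_antitoneOn {n k : ℕ} (hk : k ≤ n) :
    AntitoneOn (binomialLowerTail (n + 1) (k + 1)) (Set.Icc 0 1) := by
  intro p hp q hq hpq
  have hcont : Continuous fun u => (bernsteinPolynomial ℝ n k).eval u :=
    (bernsteinPolynomial ℝ n k).continuous
  rw [binomialLowerTail_eq_integral hk, binomialLowerTail_eq_integral hk,
    ← intervalIntegral.integral_add_adjacent_intervals (hcont.intervalIntegrable p q)
      (hcont.intervalIntegrable q 1)]
  have : 0 ≤ ∫ u in p..q, (bernsteinPolynomial ℝ n k).eval u :=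
    intervalIntegral.integral_nonneg hpq fun u hu =>
      bernsteinPolynomial_eval_nonneg n k ⟨hp.1.trans hu.1, hu.2.trans hq.2⟩
  nlinarith

lemma bernsteinPolynomial_eval_add_mul_le (n k : ℕ) {p q s : ℝ} (hp : 0 ≤ p) (hpq : p ≤ q)
    (hs : 0 ≤ s) (hqs : q + s ≤ 1) :
    (bernsteinPolynomial ℝ n k).eval (q + s) * (bernsteinPolynomial ℝ n k).eval p ≤
      (bernsteinPolynomial ℝ n k).eval (p + s) * (bernsteinPolynomial ℝ n k).eval q := by
  simp only [bernsteinPolynomial_eval]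
  have hq : 0 ≤ q := hp.trans hpq
  have hu : (q + s) * p ≤ (p + s) * q := by nlinarith
  have hv : (1 - (q + s)) * (1 - p) ≤ (1 - (p + s)) * (1 - q) := by nlinarith
  calc _ = (n.choose k : ℝ) ^ 2 * (((q + s) * p) ^ k * ((1 - (q + s)) * (1 - p)) ^ (n - k)) := by
        simp only [mul_pow]; ring
    _ ≤ (n.choose k : ℝ) ^ 2 * (((p + s) * q) ^ k * ((1 - (p + s)) * (1 - q)) ^ (n - k)) := by
        have : 0 ≤ 1 - (q + s) := by linarith
        have : 0 ≤ 1 - p := by linarith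
        gcongr
    _ = _ := by simp only [mul_pow]; ring

lemma binomialLowerTail_mul_le {n k : ℕ} (hk : k ≤ n) {p q : ℝ} (hp : 0 ≤ p) (hpq : p ≤ q)
    (hq : q ≤ 1) :
    binomialLowerTail (n + 1) (k + 1) q * (bernsteinPolynomial ℝ n k).eval p ≤
      binomialLowerTail (n + 1) (k + 1) p * (bernsteinPolynomial ℝ n k).eval q := by
  set f : ℝ → ℝ := fun u => (bernsteinPolynomial ℝ n k).eval u
  have hcont : Continuous f := (bernsteinPolynomial ℝ n k).continuous
  have hshift : ∀ a, ∫ u in a..1, f u = ∫ s in 0..1 - a, f (a + s) := fun a => by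
    rw [intervalIntegral.integral_comp_add_left]; simp
  have hint : ∀ a, IntervalIntegrable (fun s => f (a + s)) volume 0 (1 - q) := fun a =>
    (hcont.comp (continuous_const_add a)).intervalIntegrable _ _
  rw [binomialLowerTail_eq_integral hk, binomialLowerTail_eq_integral hk, mul_assoc, mul_assoc,
    hshift, hshift]
  refine mul_le_mul_of_nonneg_left ?_ (by positivity)
  calc (∫ s in 0..1 - q, f (q + s)) * f p
      = ∫ s in 0..1 - q, f (q + s) * f p := (intervalIntegral.integral_mul_const _ _).symm
    _ ≤ ∫ s in 0..1 - q, f (p + s) * f q := by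
        refine intervalIntegral.integral_mono_on (by linarith) ((hint q).mul_const _)
          ((hint p).mul_const _) fun s hs => ?_
        exact bernsteinPolynomial_eval_add_mul_le n k hp hpq hs.1 (by linarith [hs.2])
    _ = (∫ s in 0..1 - q, f (p + s)) * f q := intervalIntegral.integral_mul_const _ _
    _ ≤ (∫ s in 0..1 - p, f (p + s)) * f q := by
        refine mul_le_mul_of_nonneg_right ?_
          (bernsteinPolynomial_eval_nonneg n k ⟨hp.trans hpq, hq⟩)
        refine intervalIntegral.integral_mono_interval le_rfl (by linarith) (by linarith) ?_
          ((hcont.comp (continuous_const_add p)).intervalIntegrable _ _)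
        refine (ae_restrict_iff' measurableSet_Ioc).2 (Filter.Eventually.of_forall fun s hs => ?_)
        exact bernsteinPolynomial_eval_nonneg n k ⟨by linarith [hs.1], by linarith [hs.2]⟩

lemma succ_div_succ_lt_one {n k : ℕ} (hk : k < n) : (k + 1 : ℝ) / (n + 1) < 1 := by
  rw [div_lt_one (by positivity)]; exact_mod_cast Nat.succ_lt_succ hk

lemma sub_mul_succ_div_succ {n k : ℕ} (hk : k ≤ n) :
    ((n - k : ℕ) : ℝ) * ((k + 1) / (n + 1)) = (k + 1) * (1 - (k + 1) / (n + 1)) := by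
  rw [Nat.cast_sub hk]; field_simp; ring

lemma bernsteinPolynomial_eval_mul_le {n k : ℕ} (hk : k < n) {x : ℝ} (hx : 1 ≤ x)
    (hxc : x * ((k + 1 : ℝ) / (n + 1)) ≤ 1) :
    (bernsteinPolynomial ℝ n k).eval (x * ((k + 1 : ℝ) / (n + 1))) ≤
      exp (1 - x) * (bernsteinPolynomial ℝ n k).eval ((k + 1 : ℝ) / (n + 1)) := by
  have hc1 := succ_div_succ_lt_one hk
  have hmc := sub_mul_succ_div_succ hk.le
  set c : ℝ := (k + 1) / (n + 1)
  have hc0 : 0 < c := by positivity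
  set d := (x - 1) * c / (1 - c) with hd_def
  have h1c : 0 < 1 - c := by linarith
  have hsplit : 1 - x * c = (1 - d) * (1 - c) := by rw [hd_def]; field_simp; ring
  have hd : 0 ≤ 1 - d := by
    have : 0 ≤ (1 - d) * (1 - c) := by linarith
    exact nonneg_of_mul_nonneg_left this h1c
  have hpow : (x * c) ^ k ≤ (exp (x - 1) * c) ^ k := by
    gcongr; linarith [add_one_le_exp (x - 1)]
  have hpow' : (1 - x * c) ^ (n - k) ≤ (exp (-d) * (1 - c)) ^ (n - k) := by
    rw [hsplit]; gcongr; linarith [add_one_le_exp (-d)]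
  have hexp : exp (x - 1) ^ k * exp (-d) ^ (n - k) = exp (1 - x) := by
    rw [← exp_nat_mul, ← exp_nat_mul, ← exp_add]
    congr 1
    have : ((n - k : ℕ) : ℝ) * d = (k + 1) * (x - 1) := by
      simp only [d, mul_div_assoc', mul_left_comm _ (x - 1), hmc]; field_simp
    linear_combination -this
  rw [bernsteinPolynomial_eval, bernsteinPolynomial_eval]
  calc (n.choose k : ℝ) * (x * c) ^ k * (1 - x * c) ^ (n - k)
      ≤ n.choose k * (exp (x - 1) * c) ^ k * (exp (-d) * (1 - c)) ^ (n - k) := by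
        have : 0 ≤ 1 - x * c := by linarith
        gcongr
    _ = exp (x - 1) ^ k * exp (-d) ^ (n - k) * (n.choose k * c ^ k * (1 - c) ^ (n - k)) := by
        simp only [mul_pow]; ring
    _ = _ := by rw [hexp]

lemma reflection_deriv_nonneg {c s : ℝ} {r M : ℕ} (hc0 : 0 < c) (hMc : M * c = r * (1 - c))
    (hs : 1 ≤ s) (hcs : c * s < 1) :
    0 ≤ M * (c * s⁻¹ / (1 - c * s⁻¹)) + M * (c * s / (1 - c * s)) - 2 * r := by
  have hsc : 0 < s - c := by nlinarith
  have h1 : 0 < 1 - c * s := by linarith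
  have key : M * (c * s⁻¹ / (1 - c * s⁻¹)) + M * (c * s / (1 - c * s)) - 2 * r =
      r * (1 + c) * (s - 1) ^ 2 / ((s - c) * (1 - c * s)) := by
    have : 1 - c * s⁻¹ = (s - c) / s := by field_simp
    rw [this]
    field_simp
    linear_combination ((1 - c * s) + s * (s - c)) * hMc
  rw [key]
  positivity

-- `hMc` says `c = r / (r + M)`; the log of the ratio of the two sides vanishes at `w = 0` and
-- its derivative is `r (1 + c) (e^w - 1)² / ((e^w - c)(1 - c e^w)) ≥ 0`.
lemma reflection_le {c w : ℝ} {r M : ℕ} (hc0 : 0 < c) (hc1 : c < 1)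
    (hMc : M * c = r * (1 - c)) (hw : 0 ≤ w) (hcw : c * exp w < 1) :
    (c * exp w) ^ r * (1 - c * exp w) ^ M ≤ (c * exp (-w)) ^ r * (1 - c * exp (-w)) ^ M := by
  have hneg : ∀ v, 0 ≤ v → 0 < 1 - c * exp (-v) := fun v hv => by
    nlinarith [exp_le_one_iff.2 (neg_nonpos.2 hv)]
  have hpos : ∀ v ∈ Set.Icc 0 w, 0 < 1 - c * exp v := fun v hv => by
    nlinarith [exp_le_exp.2 hv.2]
  set D : ℝ → ℝ := fun v => M * log (1 - c * exp (-v)) - M * log (1 - c * exp v) - 2 * r * v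
  have hD : ∀ v ∈ Set.Icc 0 w, HasDerivAt D
      (M * (c * (exp v)⁻¹ / (1 - c * (exp v)⁻¹)) + M * (c * exp v / (1 - c * exp v)) - 2 * r)
      v := by
    intro v hv
    have h₁ : HasDerivAt (fun v => 1 - c * exp (-v)) (c * exp (-v)) v := by
      simpa using (((hasDerivAt_neg v).exp).const_mul c).const_sub 1
    have h₂ : HasDerivAt (fun v => 1 - c * exp v) (-(c * exp v)) v := by
      simpa using ((hasDerivAt_exp v).const_mul c).const_sub 1
    have := (((h₁.log (hneg v hv.1).ne').const_mul (M : ℝ)).sub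
      ((h₂.log (hpos v hv).ne').const_mul (M : ℝ))).sub
        ((hasDerivAt_id v).const_mul (2 * (r : ℝ)))
    refine this.congr_deriv ?_
    rw [exp_neg]; ring
  have hmono : MonotoneOn D (Set.Icc 0 w) := by
    refine monotoneOn_of_hasDerivWithinAt_nonneg (convex_Icc 0 w)
      (fun v hv => (hD v hv).continuousAt.continuousWithinAt)
      (fun v hv => (hD v (interior_subset hv)).hasDerivWithinAt) fun v hv => ?_
    rw [interior_Icc] at hv
    exact reflection_deriv_nonneg hc0 hMc (one_le_exp hv.1.le)
      (by nlinarith [exp_le_exp.2 hv.2.le])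
  have hDw : 0 ≤ D w := by
    simpa [D] using hmono ⟨le_rfl, hw⟩ ⟨hw, le_rfl⟩ hw
  have hposw := hpos w ⟨hw, le_rfl⟩
  have hnegw := hneg w hw
  rw [← log_le_log_iff (by positivity) (by positivity), log_mul, log_mul,
    log_pow, log_pow, log_pow, log_pow, log_mul, log_mul, log_exp, log_exp]
  · simp only [D] at hDw; nlinarith
  all_goals positivity

lemma binomialLowerTail_le_half {n k : ℕ} (hk : k < n) :
    binomialLowerTail (n + 1) (k + 1) ((k + 1 : ℝ) / (n + 1)) ≤ 1 / 2 := by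
  have hc1 := succ_div_succ_lt_one hk
  have hmc : ((n - k : ℕ) : ℝ) * ((k + 1) / (n + 1)) =
      ((k + 1 : ℕ) : ℝ) * (1 - (k + 1) / (n + 1)) := by
    push_cast; exact sub_mul_succ_div_succ hk.le
  set c : ℝ := (k + 1) / (n + 1)
  have hc0 : 0 < c := by positivity
  set f : ℝ → ℝ := fun u => (bernsteinPolynomial ℝ n k).eval u
  have hf : Continuous f := (bernsteinPolynomial ℝ n k).continuous
  have hf_mul : ∀ u, f u * u = n.choose k * (u ^ (k + 1) * (1 - u) ^ (n - k)) := fun u => by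
    simp only [f, bernsteinPolynomial_eval]; ring
  set g : ℝ → ℝ := fun w => f (c * exp w) * (c * exp w)
  have hg : Continuous g := by fun_prop
  have hsubst : ∀ a b, ∫ w in a..b, g w = ∫ u in c * exp a..c * exp b, f u := fun a b =>
    intervalIntegral.integral_comp_mul_deriv (fun w _ => (hasDerivAt_exp w).const_mul c)
      (by fun_prop) hf
  set W := -log c
  have hW : 0 < W := neg_pos.2 (log_neg hc0 hc1)
  have hcW : c * exp W = 1 := by simp [W, exp_neg, exp_log hc0, hc0.ne']
  have hcW' : c * exp (-W) = c * c := by simp [W, exp_log hc0]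
  have hreflect : ∫ w in 0..W, g w ≤ ∫ w in 0..W, g (-w) := by
    refine intervalIntegral.integral_mono_on_of_le_Ioo hW.le (hg.intervalIntegrable _ _)
      ((hg.comp continuous_neg).intervalIntegrable _ _) fun w hw => ?_
    have hcw : c * exp w < 1 := hcW ▸ mul_lt_mul_of_pos_left (exp_lt_exp.2 hw.2) hc0
    simp only [g, hf_mul]
    exact mul_le_mul_of_nonneg_left (reflection_le hc0 hc1 hmc hw.1.le hcw) (by positivity)
  have hupper : ∫ u in c..1, f u ≤ ∫ u in 0..c, f u := by
    calc ∫ u in c..1, f u = ∫ w in 0..W, g w := by rw [hsubst, exp_zero, mul_one, hcW]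
      _ ≤ ∫ w in 0..W, g (-w) := hreflect
      _ = ∫ u in c * c..c, f u := by
        rw [intervalIntegral.integral_comp_neg, hsubst, neg_zero, exp_zero, mul_one, hcW']
      _ ≤ ∫ u in 0..c, f u := by
        refine intervalIntegral.integral_mono_interval (by positivity)
          (mul_le_of_le_one_left hc0.le hc1.le) le_rfl ?_ (hf.intervalIntegrable _ _)
        refine (ae_restrict_iff' measurableSet_Ioc).2 (Filter.Eventually.of_forall fun u hu => ?_)
        exact bernsteinPolynomial_eval_nonneg n k ⟨hu.1.le, hu.2.trans hc1.le⟩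
  have htotal : (n + 1 : ℝ) * ((∫ u in 0..c, f u) + ∫ u in c..1, f u) = 1 := by
    rw [intervalIntegral.integral_add_adjacent_intervals (hf.intervalIntegrable _ _)
      (hf.intervalIntegrable _ _), ← binomialLowerTail_eq_integral hk.le, binomialLowerTail_zero]
  rw [binomialLowerTail_eq_integral hk.le]
  nlinarith

lemma binomialLowerTail_mul_succ_div_succ_le {n k : ℕ} (hk : k < n) {x : ℝ} (hx : 1 ≤ x)
    (hxc : x * ((k + 1 : ℝ) / (n + 1)) ≤ 1) :
    binomialLowerTail (n + 1) (k + 1) (x * ((k + 1 : ℝ) / (n + 1))) ≤ exp (1 - x) / 2 := by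
  set c : ℝ := (k + 1) / (n + 1)
  have hc0 : 0 < c := by positivity
  have hcx : c ≤ x * c := le_mul_of_one_le_left hc0.le hx
  have hfc : 0 < (bernsteinPolynomial ℝ n k).eval c := by
    rw [bernsteinPolynomial_eval]
    have : 0 < 1 - c := sub_pos.2 (succ_div_succ_lt_one hk)
    have : 0 < (n.choose k : ℝ) := by exact_mod_cast Nat.choose_pos hk.le
    positivity
  refine le_of_mul_le_mul_right ?_ hfc
  calc _ ≤ binomialLowerTail (n + 1) (k + 1) c * (bernsteinPolynomial ℝ n k).eval (x * c) :=
        binomialLowerTail_mul_le hk.le hc0.le hcx hxc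
    _ ≤ 1 / 2 * (exp (1 - x) * (bernsteinPolynomial ℝ n k).eval c) :=
        mul_le_mul (binomialLowerTail_le_half hk) (bernsteinPolynomial_eval_mul_le hk hx hxc)
          (bernsteinPolynomial_eval_nonneg n k ⟨by positivity, hxc⟩) (by norm_num)
    _ = _ := by ring

lemma binomialLowerTail_le_exp_one_sub {N r : ℕ} (hr : 0 < r) (hrN : r ≤ N) {x p : ℝ}
    (hx : 1 ≤ x) (hp : p ≤ 1) (hxp : min (x * r / N) 1 ≤ p) :
    binomialLowerTail N r p ≤ exp (1 - x) / 2 := by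
  obtain ⟨k, rfl⟩ := Nat.exists_eq_add_one_of_ne_zero hr.ne'
  obtain ⟨n, rfl⟩ := Nat.exists_eq_add_one_of_ne_zero (hr.trans_le hrN).ne'
  have hxr : x * ((k + 1 : ℕ) : ℝ) / ((n + 1 : ℕ) : ℝ) = x * ((k + 1 : ℝ) / (n + 1)) := by
    push_cast; ring
  rw [hxr] at hxp
  rcases lt_or_ge (x * ((k + 1 : ℝ) / (n + 1))) 1 with hxc | hxc
  · rw [min_eq_left hxc.le] at hxp
    have hk : k < n := by
      have := (le_mul_of_one_le_left (by positivity) hx).trans_lt hxc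
      rw [div_lt_one (by positivity)] at this
      exact_mod_cast (by linarith : (k : ℝ) < n)
    calc binomialLowerTail (n + 1) (k + 1) p
        ≤ binomialLowerTail (n + 1) (k + 1) (x * ((k + 1 : ℝ) / (n + 1))) :=
          binomialLowerTail_antitoneOn (by omega) ⟨by positivity, hxc.le⟩
            ⟨(by positivity : (0 : ℝ) ≤ _).trans hxp, hp⟩ hxp
      _ ≤ exp (1 - x) / 2 := binomialLowerTail_mul_succ_div_succ_le hk hx hxc.le
  · rw [min_eq_right hxc] at hxp
    rw [le_antisymm hp hxp, binomialLowerTail_one (by omega)]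
    positivity

lemma exists_card_filter_lt_le_card_filter_le {ι : Type*} [Fintype ι] (f : ι → ℝ)
    (hf : ∀ i, 0 ≤ f i) {ρ : ℝ} (hρ : 0 < ρ) :
    ∃ R, 0 ≤ R ∧ R < ρ ∧ #{i | f i < ρ} ≤ #{i | f i ≤ R} := by
  rcases (univ.filter (f · < ρ)).eq_empty_or_nonempty with h | h
  · exact ⟨0, le_rfl, hρ, by simp [h]⟩
  · obtain ⟨i, hi, hmax⟩ := exists_max_image _ f h
    exact ⟨f i, hf i, (mem_filter.1 hi).2,
      card_le_card fun j hj => mem_filter.2 ⟨mem_univ _, hmax j hj⟩⟩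

lemma ofReal_min_le_measure_ball {E : Type*} [PseudoMetricSpace E] [MeasurableSpace E]
    {μ : Measure E} {x : E} {a b ρ : ℝ} (hρ : 0 < ρ)
    (h : ∀ R > 0, ENNReal.ofReal (min (a * R ^ b) 1) ≤ μ (closedBall x R)) :
    ENNReal.ofReal (min (a * ρ ^ b) 1) ≤ μ (ball x ρ) := by
  have hcont : ContinuousAt (fun R => ENNReal.ofReal (min (a * R ^ b) 1)) ρ :=
    ENNReal.continuous_ofReal.continuousAt.comp
      ((continuousAt_const.mul (continuousAt_rpow_const _ _ (Or.inl hρ.ne'))).min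
        continuousAt_const)
  refine le_of_tendsto (hcont.tendsto.mono_left (nhdsWithin_le_nhds (s := Set.Iio ρ))) ?_
  filter_upwards [Ioo_mem_nhdsLT hρ] with R hR
  exact (h R hR.1).trans (measure_mono (closedBall_subset_ball hR.2))

open Classical in
lemma measure_card_filter_mem_lt_le {Ω E ι : Type*} [MeasurableSpace Ω] [MeasurableSpace E]
    [Fintype ι] {P : Measure Ω} {μ : Measure E} [IsProbabilityMeasure μ] {X : ι → Ω → E}
    (hX : ∀ i, Measurable (X i)) (hind : iIndepFun X P) (hlaw : ∀ i, P.map (X i) = μ)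
    {B : Set E} (hB : MeasurableSet B) (r : ℕ) :
    P {ω | #{i | X i ω ∈ B} < r} ≤
      ENNReal.ofReal (binomialLowerTail (Fintype.card ι) r (μ.real B)) := by
  set p := μ.real B
  have hp : 0 ≤ 1 - p := sub_nonneg.2 measureReal_le_one
  let C : Finset ι → ι → Set E := fun s i => if i ∈ s then B else Bᶜ
  have hC : ∀ s i, MeasurableSet (C s i) := fun s i => by
    by_cases h : i ∈ s <;> simp [C, h, hB, hB.compl]
  let A : Finset ι → Set Ω := fun s => ⋂ i ∈ univ, X i ⁻¹' C s i
  have hA : ∀ s, P (A s) = ENNReal.ofReal (p ^ #s * (1 - p) ^ (Fintype.card ι - #s)) := by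
    intro s
    have hfactor : ∀ i, P (X i ⁻¹' C s i) = ENNReal.ofReal (if i ∈ s then p else 1 - p) := by
      intro i
      rw [← Measure.map_apply (hX i) (hC s i), hlaw i]
      by_cases h : i ∈ s
      · simp [C, h, p, ofReal_measureReal]
      · simp [C, h, p, ← probReal_compl_eq_one_sub hB, ofReal_measureReal]
    rw [hind.measure_inter_preimage_eq_mul univ fun i _ => hC s i]
    simp only [hfactor]
    rw [← ENNReal.ofReal_prod_of_nonneg fun i _ => by split_ifs <;> positivity, prod_ite,
      prod_const, prod_const]
    simp [filter_not, card_univ_sdiff]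
  have hcover :
      {ω | #{i | X i ω ∈ B} < r} ⊆ ⋃ j ∈ range r, ⋃ s ∈ powersetCard j univ, A s := by
    intro ω hω
    simp only [Set.mem_iUnion, mem_range, mem_powersetCard]
    refine ⟨_, hω, _, ⟨subset_univ _, rfl⟩, ?_⟩
    simp only [A, C, Set.mem_iInter, Set.mem_preimage]
    intro i _
    by_cases h : X i ω ∈ B <;> simp [h]
  calc P {ω | #{i | X i ω ∈ B} < r}
      ≤ ∑ j ∈ range r, ∑ s ∈ powersetCard j univ, P (A s) :=
        (measure_mono hcover).trans <| (measure_biUnion_finset_le _ _).trans <|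
          sum_le_sum fun j _ => measure_biUnion_finset_le _ _
    _ = ∑ j ∈ range r, ENNReal.ofReal
          ((Fintype.card ι).choose j * (p ^ j * (1 - p) ^ (Fintype.card ι - j))) := by
        refine sum_congr rfl fun j _ => ?_
        rw [sum_congr rfl fun s hs => by rw [hA, (mem_powersetCard.1 hs).2], sum_const,
          card_powersetCard, card_univ, nsmul_eq_mul, ← ENNReal.ofReal_natCast,
          ← ENNReal.ofReal_mul (by positivity)]
    _ = ENNReal.ofReal (binomialLowerTail (Fintype.card ι) r p) := by
        rw [binomialLowerTail, ← ENNReal.ofReal_sum_of_nonneg fun j _ => by positivity]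
        simp only [bernsteinPolynomial_eval, mul_assoc]

lemma exp_one_sub_div_two_le (x : ℝ) : exp (1 - x) / 2 ≤ exp (2 / 3) * exp (-x) := by
  have h : exp (1 / 3) < 1 / (1 - 1 / 3) := exp_bound_div_one_sub_of_interval' (by norm_num)
    (by norm_num)
  have hsplit : exp (1 - x) = exp (1 / 3) * (exp (2 / 3) * exp (-x)) := by
    rw [← exp_add, ← exp_add]; ring_nf
  rw [hsplit]
  have := mul_pos (exp_pos (2 / 3)) (exp_pos (-x))
  nlinarith

end

theorem stmt_8_general {D : ℕ} {Ω : Type*} [MeasureSpace Ω]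
    (a b : ℝ) (ha : 0 < a) (hb : 0 < b)
    (μ : Measure (EuclideanSpace ℝ (Fin D))) [IsProbabilityMeasure μ]
    (hstd : ∀ x ∈ measSupport μ, ∀ R > (0 : ℝ),
      ENNReal.ofReal (min (a * R ^ b) 1) ≤ μ (Metric.closedBall x R))
    (N : ℕ)
    (X : Fin N → Ω → EuclideanSpace ℝ (Fin D))
    (hXmeas : ∀ i, Measurable (X i))
    (hXindep : ProbabilityTheory.iIndepFun X ℙ)
    (hXlaw : ∀ i, Measure.map (X i) ℙ = μ)
    (xt : EuclideanSpace ℝ (Fin D)) (hxt : xt ∈ measSupport μ)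
    (r : ℕ) (hr : 1 ≤ r) (hrN : r ≤ N)
    (nn : Ω → EuclideanSpace ℝ (Fin D))
    (hnn : ∀ ω, ∀ R : ℝ, 0 ≤ R →
      (‖nn ω - xt‖ ≤ R ↔
        r ≤ (Finset.univ.filter (fun i => ‖X i ω - xt‖ ≤ R)).card)) :
    ∀ t : ℝ, 1 ≤ t →
      ℙ {ω | t * ((r : ℝ) / (N * a)) ^ (1 / b) ≤ ‖nn ω - xt‖}
        ≤ ENNReal.ofReal (Real.exp (2 / 3) * Real.exp (-(t ^ b))) := by
  intro t ht
  have hx : 1 ≤ t ^ b := one_le_rpow ht hb.le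
  have hbase : 0 < (r : ℝ) / (N * a) :=
    div_pos (by exact_mod_cast hr) (mul_pos (by exact_mod_cast hr.trans hrN) ha)
  set ρ := t * ((r : ℝ) / (N * a)) ^ (1 / b)
  have hρ : 0 < ρ := by positivity
  have hρb : a * ρ ^ b = t ^ b * r / N := by
    rw [mul_rpow (by linarith) (by positivity), ← rpow_mul hbase.le, one_div_mul_cancel hb.ne',
      rpow_one]
    field_simp
  set S := {ω | (Finset.univ.filter fun i => ‖X i ω - xt‖ < ρ).card < r}
  have hevent : {ω | ρ ≤ ‖nn ω - xt‖} ⊆ S := by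
    intro ω hω
    obtain ⟨R, hR0, hRρ, hcard⟩ := exists_card_filter_lt_le_card_filter_le
      (fun i => ‖X i ω - xt‖) (fun _ => norm_nonneg _) hρ
    change ρ ≤ ‖nn ω - xt‖ at hω
    change (Finset.univ.filter fun i => ‖X i ω - xt‖ < ρ).card < r
    by_contra! h
    exact (((hnn ω R hR0).2 (h.trans hcard)).trans_lt hRρ).not_ge hω
  have hp : min (t ^ b * r / N) 1 ≤ μ.real (ball xt ρ) := by
    rw [← ENNReal.ofReal_le_ofReal_iff measureReal_nonneg, ofReal_measureReal, ← hρb]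
    exact ofReal_min_le_measure_ball hρ (hstd xt hxt)
  calc ℙ {ω | ρ ≤ ‖nn ω - xt‖} ≤ ℙ S := measure_mono hevent
    _ ≤ ENNReal.ofReal (binomialLowerTail N r (μ.real (ball xt ρ))) := by
      simpa [dist_eq_norm] using
        measure_card_filter_mem_lt_le hXmeas hXindep hXlaw measurableSet_ball r
    _ ≤ ENNReal.ofReal (exp (2 / 3) * exp (-(t ^ b))) := ENNReal.ofReal_le_ofReal <|
      (binomialLowerTail_le_exp_one_sub hr hrN hx measureReal_le_one hp).trans
        (exp_one_sub_div_two_le _)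

/-- Chernoff-type tail bound for the distance of the `r`-th nearest neighbor among `N`
i.i.d. samples from an `(a,b)`-standard distribution to a point `xt` of the support:
`ℙ(‖X̃_r − xt‖ ≥ t (r/(Na))^{1/b}) ≤ e^{2/3} e^{−t^b}` for `t ≥ 1`. -/
theorem stmt_8 {D : ℕ} {Ω : Type*} [MeasureSpace Ω] [IsProbabilityMeasure (ℙ : Measure Ω)]
    (a b : ℝ) (ha : 0 < a) (hb : 0 < b)
    (μ : Measure (EuclideanSpace ℝ (Fin D))) [IsProbabilityMeasure μ]
    (hstd : ∀ x ∈ measSupport μ, ∀ R > (0 : ℝ),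
      ENNReal.ofReal (min (a * R ^ b) 1) ≤ μ (Metric.closedBall x R))
    (N : ℕ) (hN : 1 ≤ N)
    (X : Fin N → Ω → EuclideanSpace ℝ (Fin D))
    (hXmeas : ∀ i, Measurable (X i))
    (hXindep : ProbabilityTheory.iIndepFun X ℙ)
    (hXlaw : ∀ i, Measure.map (X i) ℙ = μ)
    (xt : EuclideanSpace ℝ (Fin D)) (hxt : xt ∈ measSupport μ)
    (r : ℕ) (hr : 1 ≤ r) (hrN : r ≤ N)
    (hreg : (r : ℝ) / (N * a) ≤ 1)
    (nn : Ω → EuclideanSpace ℝ (Fin D))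
    (hnn : ∀ ω, ∀ R : ℝ, 0 ≤ R →
      (‖nn ω - xt‖ ≤ R ↔
        r ≤ (Finset.univ.filter (fun i => ‖X i ω - xt‖ ≤ R)).card)) :
    ∀ t : ℝ, 1 ≤ t →
      ℙ {ω | t * ((r : ℝ) / (N * a)) ^ (1 / b) ≤ ‖nn ω - xt‖}
        ≤ ENNReal.ofReal (Real.exp (2 / 3) * Real.exp (-(t ^ b))) :=
  stmt_8_general a b ha hb μ hstd N X hXmeas hXindep hXlaw xt hxt r hr hrN nn hnn
end

section
/- Let μ be an (a,b)-standard probability measure, X_1,…,X_N i.i.d. from μ, x̃ ∈ supp(μ), and X̃_r the r-th nearest neighbor of x̃. Then 𝔼[‖X̃_r − x̃‖] ≤ C(b) (r/(N a))^{1/b}, where C(b) depends only on b. -/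
/-!
The `r`-th nearest neighbour of `x̃` is farther than `s` exactly when fewer than `r` of the `N`
samples fall in the closed ball `B(x̃, s)`. The number of samples in that ball is binomial with
success probability `p ≥ a s^b` as long as `a s^b ≤ 1`, so a multiplicative Chernoff bound for its
lower tail gives `ℙ(‖X̃_r − x̃‖ > s) ≤ e · exp(-(N a / r) s^b)`; for larger `s` the ball already
has full mass and the event is null. Integrating this tail over `s > 0` (layer-cake formula) gives
`𝔼‖X̃_r − x̃‖ ≤ e Γ(1/b + 1) (r/(N a))^{1/b}`.
-/

open MeasureTheory ProbabilityTheory Metric Real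

section Chernoff

variable {Ω ι : Type*} [MeasurableSpace Ω] {P : Measure Ω}

theorem mgf_eq_of_forall_eq_zero_or_eq_one [IsProbabilityMeasure P] {Y : Ω → ℝ}
    (hYm : Measurable Y) (hY : ∀ ω, Y ω = 0 ∨ Y ω = 1) (t : ℝ) :
    mgf Y P t = 1 + P[Y] * (exp t - 1) := by
  have hexp : (fun ω => exp (t * Y ω)) = fun ω => 1 + (exp t - 1) * Y ω := by
    funext ω
    rcases hY ω with h | h <;> simp [h]
  have hYint : Integrable Y P := by
    refine (integrable_const (1 : ℝ)).mono' hYm.aestronglyMeasurable (ae_of_all _ fun ω => ?_)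
    rcases hY ω with h | h <;> simp [h]
  rw [mgf, hexp, integral_add (integrable_const 1) (hYint.const_mul _), integral_const_mul]
  simp [mul_comm]

variable [Fintype ι] {Z : ι → Ω → ℝ}

theorem mgf_sum_le_of_forall_eq_zero_or_eq_one (hZm : ∀ i, Measurable (Z i))
    (hind : iIndepFun Z P) (hZ : ∀ i ω, Z i ω = 0 ∨ Z i ω = 1) {p : ℝ} (hp : ∀ i, P[Z i] = p)
    (t : ℝ) : mgf (∑ i, Z i) P t ≤ exp (Fintype.card ι * p * (exp t - 1)) := by
  have := hind.isProbabilityMeasure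
  have hmgf : ∀ i, mgf (Z i) P t = 1 + p * (exp t - 1) := fun i => by
    rw [mgf_eq_of_forall_eq_zero_or_eq_one (hZm i) (hZ i), hp]
  calc mgf (∑ i, Z i) P t = ∏ i, mgf (Z i) P t := hind.mgf_sum hZm _
    _ ≤ ∏ _i : ι, exp (p * (exp t - 1)) := Finset.prod_le_prod (fun _ _ => mgf_nonneg)
        fun i _ => by linarith [hmgf i, add_one_le_exp (p * (exp t - 1))]
    _ = exp (Fintype.card ι * p * (exp t - 1)) := by
        rw [Finset.prod_const, Finset.card_univ, ← exp_nat_mul, mul_assoc]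

theorem measureReal_sum_le_sub_one_le_exp (hZm : ∀ i, Measurable (Z i))
    (hind : iIndepFun Z P) (hZ : ∀ i ω, Z i ω = 0 ∨ Z i ω = 1) {p : ℝ} (hp : ∀ i, P[Z i] = p)
    (r : ℕ) :
    P.real {ω | ∑ i, Z i ω ≤ r - 1} ≤ exp (1 - Fintype.card ι * p / r) := by
  have := hind.isProbabilityMeasure
  set u := Fintype.card ι * p / r
  rcases le_or_gt u 1 with hu | hu
  · exact measureReal_le_one.trans (one_le_exp (by linarith))
  have hr : (1 : ℝ) ≤ r := by
    rcases r.eq_zero_or_pos with rfl | hr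
    · simp [u] at hu
      linarith
    · exact_mod_cast hr
  have hS0 : ∀ ω, 0 ≤ (∑ i, Z i) ω := fun ω => by
    rw [Finset.sum_apply]
    exact Finset.sum_nonneg fun i _ => by rcases hZ i ω with h | h <;> simp [h]
  have hint : Integrable (fun ω => exp (-log u * (∑ i, Z i) ω)) P := by
    refine (integrable_const (1 : ℝ)).mono' (by fun_prop) (ae_of_all _ fun ω => ?_)
    rw [norm_of_nonneg (exp_pos _).le, exp_le_one_iff]
    nlinarith [log_nonneg hu.le, hS0 ω]
  -- the exponent `t = -log u` optimises the Chernoff bound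
  have hchernoff := measure_le_le_exp_mul_mgf (r - 1 : ℝ)
    (neg_nonpos.mpr (log_nonneg hu.le)) hint
  simp only [Finset.sum_apply] at hchernoff
  refine hchernoff.trans ?_
  have hmean : Fintype.card ι * p = r * u := (mul_div_cancel₀ _ (by positivity)).symm
  calc exp (-(-log u) * (r - 1)) * mgf (∑ i, Z i) P (-log u)
      ≤ exp (log u * (r - 1)) * exp (r * u * (u⁻¹ - 1)) := by
        rw [neg_neg]
        gcongr
        refine (mgf_sum_le_of_forall_eq_zero_or_eq_one hZm hind hZ hp _).trans_eq ?_
        rw [hmean, exp_neg, exp_log (by linarith)]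
    _ ≤ exp (1 - u) := by
        rw [← exp_add, exp_le_exp]
        have hlog := log_le_sub_one_of_pos (show 0 < u by linarith)
        have : r * u * (u⁻¹ - 1) = r - r * u := by field_simp
        rw [this]
        nlinarith [mul_le_mul_of_nonneg_right hlog (sub_nonneg.mpr hr)]

end Chernoff

theorem integral_le_setIntegral_of_measureReal_lt_le {α : Type*} [MeasurableSpace α]
    {μ : Measure α} [IsFiniteMeasure μ] {f : α → ℝ} (hf0 : 0 ≤ᵐ[μ] f) (hfm : AEMeasurable f μ)
    {g : ℝ → ℝ} (hg : IntegrableOn g (Set.Ioi 0))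
    (htail : ∀ t > 0, μ.real {x | t < f x} ≤ g t) :
    ∫ x, f x ∂μ ≤ ∫ t in Set.Ioi 0, g t := by
  have hg0 : 0 ≤ᵐ[volume.restrict (Set.Ioi 0)] g :=
    (ae_restrict_iff' measurableSet_Ioi).mpr
      (ae_of_all _ fun t ht => measureReal_nonneg.trans (htail t ht))
  rw [integral_eq_lintegral_of_nonneg_ae hf0 hfm.aestronglyMeasurable,
    lintegral_eq_lintegral_meas_lt μ hf0 hfm]
  refine ENNReal.toReal_le_of_le_ofReal (integral_nonneg_of_ae hg0) ?_
  rw [ofReal_integral_eq_lintegral_ofReal hg hg0]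
  refine setLIntegral_mono' measurableSet_Ioi fun t ht => ?_
  rw [← ofReal_measureReal]
  exact ENNReal.ofReal_le_ofReal (htail t ht)

theorem integrableOn_exp_one_sub_mul_rpow {b c : ℝ} (hb : 0 < b) (hc : 0 < c) :
    IntegrableOn (fun t => exp (1 - c * t ^ b)) (Set.Ioi 0) := by
  have h := (integrableOn_rpow_mul_exp_neg_mul_rpow neg_one_lt_zero hb hc).const_mul (exp 1)
  simp only [rpow_zero, one_mul, neg_mul, ← exp_add, ← sub_eq_add_neg] at h
  exact h

theorem integral_exp_one_sub_mul_rpow {b c : ℝ} (hb : 0 < b) (hc : 0 < c) :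
    ∫ t in Set.Ioi 0, exp (1 - c * t ^ b) = exp 1 * Gamma (1 / b + 1) * c⁻¹ ^ (1 / b) := by
  simp_rw [sub_eq_add_neg, exp_add, integral_const_mul, ← neg_mul,
    integral_exp_neg_mul_rpow hb hc, inv_rpow hc.le, ← rpow_neg hc.le, neg_div]
  ring

theorem natCast_card_filter_norm_sub_le {ι E : Type*} [Fintype ι] [SeminormedAddCommGroup E]
    (y : ι → E) (x : E) (s : ℝ) :
    ((Finset.univ.filter fun i => ‖y i - x‖ ≤ s).card : ℝ)
      = ∑ i, (closedBall x s).indicator 1 (y i) := by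
  classical
  simp [Set.indicator_apply, mem_closedBall, dist_eq_norm]

section NearestNeighbor

variable {Ω ι E : Type*} [Fintype ι] [SeminormedAddCommGroup E]

/-- Only the distance of `nn ω` to `x` is pinned down: it is the `r`-th smallest of the
distances `‖X i ω - x‖`. -/
def IsRthNearestNeighbor (X : ι → Ω → E) (x : E) (r : ℕ) (nn : Ω → E) : Prop :=
  ∀ ω, ∀ R : ℝ, 0 ≤ R →
    (‖nn ω - x‖ ≤ R ↔ r ≤ (Finset.univ.filter (fun i => ‖X i ω - x‖ ≤ R)).card)

variable {X : ι → Ω → E} {x : E} {r : ℕ} {nn : Ω → E}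

namespace IsRthNearestNeighbor

theorem lt_norm_sub_iff (h : IsRthNearestNeighbor X x r nn) (ω : Ω) {s : ℝ} (hs : 0 ≤ s) :
    s < ‖nn ω - x‖ ↔ ∑ i, (closedBall x s).indicator 1 (X i ω) ≤ (r : ℝ) - 1 := by
  rw [← natCast_card_filter_norm_sub_le, ← not_le, h ω s hs, le_sub_iff_add_le]
  norm_cast
  omega

variable [MeasurableSpace Ω] {P : Measure Ω} [MeasurableSpace E]

theorem ae_norm_sub_le (h : IsRthNearestNeighbor X x r nn) (hXm : ∀ i, Measurable (X i))
    {μ : Measure E} (hmap : ∀ i, P.map (X i) = μ) (hrι : r ≤ Fintype.card ι) {A : ℝ}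
    (hA0 : 0 ≤ A) (hA : ∀ᵐ y ∂μ, y ∈ closedBall x A) :
    ∀ᵐ ω ∂P, ‖nn ω - x‖ ≤ A := by
  have hall : ∀ᵐ ω ∂P, ∀ i, X i ω ∈ closedBall x A :=
    ae_all_iff.mpr fun i => ae_of_ae_map (hXm i).aemeasurable ((hmap i).symm ▸ hA)
  filter_upwards [hall] with ω hω
  rw [h ω A hA0, Finset.filter_true_of_mem fun i _ => by simpa [dist_eq_norm] using hω i]
  exact hrι

variable [OpensMeasurableSpace E]

theorem measurable_norm_sub (h : IsRthNearestNeighbor X x r nn) (hXm : ∀ i, Measurable (X i)) :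
    Measurable fun ω => ‖nn ω - x‖ := by
  refine measurable_of_Ioi fun s => ?_
  rcases lt_or_ge s 0 with hs | hs
  · convert MeasurableSet.univ
    exact Set.eq_univ_of_forall fun ω => hs.trans_le (norm_nonneg _)
  · simp only [Set.preimage, Set.mem_Ioi, h.lt_norm_sub_iff _ hs]
    refine measurableSet_le (Finset.measurable_sum _ fun i _ => ?_) measurable_const
    exact (measurable_const.indicator measurableSet_closedBall).comp (hXm i)

theorem measureReal_lt_norm_sub_le (h : IsRthNearestNeighbor X x r nn)
    (hXm : ∀ i, Measurable (X i)) (hind : iIndepFun X P) {μ : Measure E}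
    (hmap : ∀ i, P.map (X i) = μ) {s : ℝ} (hs : 0 ≤ s) :
    P.real {ω | s < ‖nn ω - x‖}
      ≤ exp (1 - Fintype.card ι * μ.real (closedBall x s) / r) := by
  have hball : Measurable ((closedBall x s).indicator (1 : E → ℝ)) :=
    measurable_const.indicator measurableSet_closedBall
  simp only [h.lt_norm_sub_iff _ hs]
  refine measureReal_sum_le_sub_one_le_exp (fun i => hball.comp (hXm i))
    (hind.comp _ fun _ => hball) (fun i ω => ?_) (fun i => ?_) r
  · by_cases hω : X i ω ∈ closedBall x s <;> simp [hω]
  · rw [← integral_indicator_one measurableSet_closedBall, ← hmap i,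
      integral_map (hXm i).aemeasurable hball.aestronglyMeasurable]
    rfl

theorem measureReal_lt_norm_sub_le_exp_rpow (h : IsRthNearestNeighbor X x r nn) (hXm : ∀ i, Measurable (X i)) (hind : iIndepFun X P)
    {μ : Measure E} [IsProbabilityMeasure μ] (hmap : ∀ i, P.map (X i) = μ) {a b : ℝ}
    (ha : 0 < a) (hb : 0 < b)
    (hμx : ∀ R > (0 : ℝ), ENNReal.ofReal (min (a * R ^ b) 1) ≤ μ (closedBall x R))
    (hrι : r ≤ Fintype.card ι) {s : ℝ} (hs : 0 < s) :
    P.real {ω | s < ‖nn ω - x‖} ≤ exp (1 - Fintype.card ι * a / r * s ^ b) := by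
  set A := a⁻¹ ^ b⁻¹
  have hA : 0 < A := by positivity
  have haA : a * A ^ b = 1 := by
    rw [rpow_inv_rpow (inv_nonneg.mpr ha.le) hb.ne', mul_inv_cancel₀ ha.ne']
  rcases le_or_gt s A with hsA | hAs
  · have hsb : a * s ^ b ≤ 1 := haA ▸ by gcongr
    have hball : a * s ^ b ≤ μ.real (closedBall x s) := by
      have := hμx s hs
      rwa [min_eq_left hsb, ENNReal.ofReal_le_iff_le_toReal (measure_ne_top _ _)] at this
    refine (h.measureReal_lt_norm_sub_le hXm hind hmap hs.le).trans (exp_le_exp.mpr ?_)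
    rw [show (Fintype.card ι : ℝ) * a / r * s ^ b = Fintype.card ι * (a * s ^ b) / r by ring]
    gcongr
  · have hμA : ∀ᵐ y ∂μ, y ∈ closedBall x A := by
      refine (ae_mem_iff_measure_eq measurableSet_closedBall.nullMeasurableSet).mpr
        (le_antisymm (measure_mono (Set.subset_univ _)) ?_)
      simpa [haA] using hμx A hA
    have hnull : P {ω | s < ‖nn ω - x‖} = 0 :=
      measure_mono_null (fun ω hω => not_le.mpr (hAs.trans hω))
        (ae_iff.mp (h.ae_norm_sub_le hXm hmap hrι hA.le hμA))
    rw [measureReal_def, hnull, ENNReal.toReal_zero]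
    positivity

end IsRthNearestNeighbor

end NearestNeighbor

/-- Expected distance of the `r`-th nearest neighbor among `N` i.i.d. samples from an
`(a,b)`-standard distribution to a support point `x̃`:
`𝔼[‖X̃_r − x̃‖] ≤ C(b) (r/(Na))^{1/b}` with `C(b)` depending only on `b`. -/
theorem stmt_9 (b : ℝ) (hb : 0 < b) :
    ∃ C : ℝ, 0 < C ∧
      ∀ (D : ℕ) (Ω : Type) (_ : MeasureSpace Ω), IsProbabilityMeasure (ℙ : Measure Ω) →
      ∀ (a : ℝ), 0 < a →
      ∀ (μ : Measure (EuclideanSpace ℝ (Fin D))), IsProbabilityMeasure μ →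
      (∀ x ∈ measSupport μ, ∀ R > (0 : ℝ),
        ENNReal.ofReal (min (a * R ^ b) 1) ≤ μ (Metric.closedBall x R)) →
      ∀ (N : ℕ), 1 ≤ N →
      ∀ (X : Fin N → Ω → EuclideanSpace ℝ (Fin D)),
        (∀ i, Measurable (X i)) →
        ProbabilityTheory.iIndepFun X ℙ →
        (∀ i, Measure.map (X i) ℙ = μ) →
      ∀ (xt : EuclideanSpace ℝ (Fin D)), xt ∈ measSupport μ →
      ∀ (r : ℕ), 1 ≤ r → r ≤ N →
      ∀ (nn : Ω → EuclideanSpace ℝ (Fin D)),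
        (∀ ω, ∀ R : ℝ, 0 ≤ R →
          (‖nn ω - xt‖ ≤ R ↔
            r ≤ (Finset.univ.filter (fun i => ‖X i ω - xt‖ ≤ R)).card)) →
      ∫ ω, ‖nn ω - xt‖ ∂ℙ ≤ C * ((r : ℝ) / (N * a)) ^ (1 / b) := by
  refine ⟨exp 1 * Gamma (1 / b + 1), mul_pos (exp_pos 1) (Gamma_pos_of_pos (by positivity)), ?_⟩
  intro D Ω _ _ a ha μ _ hstd N hN X hXm hXind hXmap xt hxt r hr hrN nn hnn
  have hnn : IsRthNearestNeighbor X xt r nn := hnn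
  have hc : 0 < N * a / r := by
    have : (0 : ℝ) < N := by exact_mod_cast hN
    positivity
  have htail (t : ℝ) (ht : 0 < t) :
      (ℙ : Measure Ω).real {ω | t < ‖nn ω - xt‖} ≤ exp (1 - N * a / r * t ^ b) := by
    simpa using hnn.measureReal_lt_norm_sub_le_exp_rpow hXm hXind hXmap ha hb (hstd xt hxt)
      (by simpa using hrN) ht
  calc ∫ ω, ‖nn ω - xt‖ ≤ ∫ t in Set.Ioi 0, exp (1 - N * a / r * t ^ b) :=
        integral_le_setIntegral_of_measureReal_lt_le (ae_of_all _ fun _ => norm_nonneg _)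
          (hnn.measurable_norm_sub hXm).aemeasurable (integrableOn_exp_one_sub_mul_rpow hb hc)
          htail
    _ = exp 1 * Gamma (1 / b + 1) * ((r : ℝ) / (N * a)) ^ (1 / b) := by
        rw [integral_exp_one_sub_mul_rpow hb hc, inv_div]
end
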